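/- Let d ≥ 2 and n ≥ 2 be integers. Let g(x) = Σ_{i=2}^{d} c_i x^i ∈ ℂ[x], and let f(x,y) = y + Σ_{2 ≤ i+j ≤ n} a_{i,j} x^i y^j ∈ ℂ[x,y]. Suppose that f(x, g(x)) = λ x^{dn} for some λ ∈ ℂ with λ ≠ 0. Then c_i = 0 for every 2 ≤ i ≤ d−1, i.e. g(x) = c_d x^d; moreover c_d ≠ 0, a_{0,n} ≠ 0, and a_{0,n} c_d^n = λ. -/

import Mathlib

/-!
Write `G = g(x) ∈ ℂ[x]`, a polynomial of degree at most `d`. A monomial `x^i y^j` of `f` other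
than `y^n` contributes to `f(x, G)` only in degrees `≤ i + dj ≤ d(n-1) + 1`, and so does the term
`y` because `n ≥ 2`; above degree `d(n-1) + 1` the polynomial `f(x, G) = λ x^{dn}` therefore agrees
with `a_{0,n} G^n`. In degree `dn` this reads `a_{0,n} c_d^n = λ`. If `r = G - c_d x^d` were
nonzero, of degree `e` with `2 ≤ e < d`, the coefficient of `x^{d(n-1)+e}` in `G^n` would be
`n c_d^{n-1}` times the leading coefficient of `r`, which is nonzero, while `λ x^{dn}` has no
such term.
-/

open Finset

namespace Polynomial

variable {R : Type*}

section CommSemiring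

variable [CommSemiring R]

theorem coeff_sum_C_mul_X_pow (s : Finset ℕ) (c : ℕ → R) (k : ℕ) :
    (∑ i ∈ s, C (c i) * X ^ i).coeff k = if k ∈ s then c k else 0 := by
  simp only [finsetSum_coeff, coeff_C_mul_X_pow]
  exact sum_ite_eq s k c

theorem natDegree_sum_C_mul_X_pow_le {s : Finset ℕ} {d : ℕ} (c : ℕ → R) (hs : ∀ i ∈ s, i ≤ d) :
    (∑ i ∈ s, C (c i) * X ^ i).natDegree ≤ d :=
  natDegree_sum_le_of_forall_le _ _ fun i hi => (natDegree_C_mul_X_pow_le _ _).trans (hs i hi)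

theorem natDegree_C_mul_X_pow_mul_pow_le {G : R[X]} {d : ℕ} (hG : G.natDegree ≤ d) (b : R)
    (i j : ℕ) : (C b * X ^ i * G ^ j).natDegree ≤ i + j * d :=
  natDegree_mul_le_of_le ((natDegree_C_mul_le _ _).trans (natDegree_X_pow_le i))
    (natDegree_pow_le_of_le j hG)

theorem coeff_add_sum_C_mul_X_pow_mul_pow {G : R[X]} {d n m : ℕ} {S : Finset (ℕ × ℕ)}
    (a : ℕ → ℕ → R) (hS : ∀ p ∈ S, p.1 + p.2 ≤ n) (h0n : (0, n) ∈ S) (hG : G.natDegree ≤ d)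
    (hd : 1 ≤ d) (hn : 2 ≤ n) (hm : d * (n - 1) + 1 < m) :
    (G + ∑ p ∈ S, C (a p.1 p.2) * X ^ p.1 * G ^ p.2).coeff m = a 0 n * (G ^ n).coeff m := by
  have hGm : G.coeff m = 0 := by
    have : d ≤ d * (n - 1) := Nat.le_mul_of_pos_right d (by omega)
    exact coeff_eq_zero_of_natDegree_lt (by omega)
  have hrest : (∑ p ∈ S.erase (0, n), C (a p.1 p.2) * X ^ p.1 * G ^ p.2).coeff m = 0 := by
    refine coeff_eq_zero_of_natDegree_lt
      ((natDegree_sum_le_of_forall_le _ _ fun p hp => ?_).trans_lt hm)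
    obtain ⟨hp0n, hp⟩ := mem_erase.1 hp
    have hpn := hS p hp
    have hp2 : p.2 < n := by
      by_contra h
      exact hp0n (Prod.ext (by simp; omega) (by simp; omega))
    refine (natDegree_C_mul_X_pow_mul_pow_le hG _ _ _).trans ?_
    obtain ⟨k, rfl⟩ : ∃ k, n = p.2 + k + 1 := ⟨n - p.2 - 1, by omega⟩
    rw [show p.2 + k + 1 - 1 = p.2 + k by omega]
    nlinarith
  rw [← add_sum_erase S _ h0n, coeff_add, coeff_add, hGm, hrest]
  simp

theorem coeff_C_mul_X_pow_add_pow_succ {a : R} {r : R[X]} {d e : ℕ} (hr : r.natDegree ≤ e)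
    (hed : e < d) (n : ℕ) :
    ((C a * X ^ d + r) ^ (n + 1)).coeff (d * n + e) = (n + 1) * a ^ n * r.coeff e := by
  set G := C a * X ^ d + r
  have hG : G.natDegree ≤ d :=
    natDegree_add_le_of_degree_le (natDegree_C_mul_X_pow_le a d) (hr.trans hed.le)
  have hGd : G.coeff d = a := by
    simp [G, coeff_eq_zero_of_natDegree_lt (hr.trans_lt hed)]
  induction n with
  | zero => simp [G, hed.ne]
  | succ n ih =>
    have hX : (G ^ (n + 1) * (C a * X ^ d)).coeff (d * (n + 1) + e) =
        a * (G ^ (n + 1)).coeff (d * n + e) := by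
      rw [show G ^ (n + 1) * (C a * X ^ d) = C a * (G ^ (n + 1) * X ^ d) by ring, coeff_C_mul,
        show d * (n + 1) + e = d * n + e + d by ring, coeff_mul_X_pow]
    have hr : (G ^ (n + 1) * r).coeff (d * (n + 1) + e) = a ^ (n + 1) * r.coeff e := by
      rw [mul_comm d, coeff_mul_add_eq_of_natDegree_le (natDegree_pow_le_of_le _ hG) hr,
        coeff_pow_of_natDegree_le hG, hGd]
    rw [pow_succ, mul_add, coeff_add, hX, hr, ih]
    push_cast
    ring

end CommSemiring

variable [CommRing R] [IsDomain R] [CharZero R]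

theorem eq_zero_and_mul_pow_eq_of_substitution_eq_C_mul_X_pow {d n : ℕ} {c : ℕ → R}
    {a : ℕ → ℕ → R} {lam : R} {S : Finset (ℕ × ℕ)}
    (h : (∑ i ∈ Icc 2 d, C (c i) * X ^ i) +
        ∑ p ∈ S, C (a p.1 p.2) * X ^ p.1 * (∑ i ∈ Icc 2 d, C (c i) * X ^ i) ^ p.2 =
      C lam * X ^ (d * n))
    (hd : 2 ≤ d) (hn : 2 ≤ n) (hlam : lam ≠ 0) (hS : ∀ p ∈ S, p.1 + p.2 ≤ n) (h0n : (0, n) ∈ S) :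
    (∀ i ∈ Ico 2 d, c i = 0) ∧ a 0 n * c d ^ n = lam := by
  set G := ∑ i ∈ Icc 2 d, C (c i) * X ^ i
  have hG : G.natDegree ≤ d := natDegree_sum_C_mul_X_pow_le c fun i hi => (mem_Icc.1 hi).2
  have key (m : ℕ) (hm : d * (n - 1) + 1 < m) :
      a 0 n * (G ^ n).coeff m = if m = d * n then lam else 0 := by
    rw [← coeff_add_sum_C_mul_X_pow_mul_pow a hS h0n hG (by omega) hn hm, h, coeff_C_mul_X_pow]
  have htop : a 0 n * c d ^ n = lam := by
    have hdn : d * (n - 1) + 1 < d * n := by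
      obtain ⟨k, rfl⟩ : ∃ k, n = k + 1 := ⟨n - 1, by omega⟩
      rw [Nat.add_sub_cancel, Nat.mul_succ]
      omega
    have := key (d * n) hdn
    rwa [if_pos rfl, mul_comm d n, coeff_pow_of_natDegree_le hG, coeff_sum_C_mul_X_pow,
      if_pos (mem_Icc.2 ⟨hd, le_rfl⟩)] at this
  refine ⟨fun i hi => ?_, htop⟩
  set r := ∑ i ∈ Ico 2 d, C (c i) * X ^ i
  suffices hr : r = 0 by
    simpa [r, coeff_sum_C_mul_X_pow, hi] using congrArg (coeff · i) hr
  by_contra hr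
  set e := r.natDegree
  have he : e ∈ Ico 2 d := by
    by_contra he
    exact hr (leadingCoeff_eq_zero.1 (by rw [leadingCoeff, coeff_sum_C_mul_X_pow, if_neg he]))
  have hGr : G = C (c d) * X ^ d + r := by
    simp only [G, r]
    rw [← Ico_insert_right (by omega : 2 ≤ d), sum_insert (by simp), add_comm]
  obtain ⟨k, rfl⟩ : ∃ k, n = k + 1 := ⟨n - 1, by omega⟩
  obtain ⟨he2, hed⟩ := mem_Ico.1 he
  have hcoeff := key (d * k + e) (by rw [Nat.add_sub_cancel]; omega)
  rw [hGr, coeff_C_mul_X_pow_add_pow_succ le_rfl hed, if_neg (by rw [Nat.mul_succ]; omega)]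
    at hcoeff
  have han : a 0 (k + 1) ≠ 0 := left_ne_zero_of_mul (htop ▸ hlam)
  have hcd : c d ≠ 0 := ne_zero_pow k.succ_ne_zero (right_ne_zero_of_mul (htop ▸ hlam))
  simp [han, hcd, Nat.cast_add_one_ne_zero, hr] at hcoeff

end Polynomial

open MvPolynomial

theorem substitution_claim (d n : ℕ) (hd : 2 ≤ d) (hn : 2 ≤ n)
    (c : ℕ → ℂ) (a : ℕ → ℕ → ℂ) (lam : ℂ) (hlam : lam ≠ 0)
    (g f : MvPolynomial (Fin 2) ℂ)
    (hg : g = ∑ i ∈ Finset.Icc 2 d, MvPolynomial.C (c i) * X 0 ^ i)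
    (hf : f = X 1 + ∑ p ∈ (Finset.range (n + 1) ×ˢ Finset.range (n + 1)).filter
        (fun p => 2 ≤ p.1 + p.2 ∧ p.1 + p.2 ≤ n),
        MvPolynomial.C (a p.1 p.2) * X 0 ^ p.1 * X 1 ^ p.2)
    (hsub : MvPolynomial.aeval ![X 0, g] f = MvPolynomial.C lam * X 0 ^ (d * n)) :
    (∀ i, 2 ≤ i → i ≤ d - 1 → c i = 0) ∧
    g = MvPolynomial.C (c d) * X 0 ^ d ∧
    c d ≠ 0 ∧ a 0 n ≠ 0 ∧ a 0 n * c d ^ n = lam := by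
  have hpoly := congrArg (MvPolynomial.aeval fun _ => (Polynomial.X : Polynomial ℂ)) hsub
  simp only [hf, hg, map_add, map_sum, map_mul, map_pow, aeval_X, algebraMap_eq, algHom_C,
    Matrix.cons_val_zero, Matrix.cons_val_one, Matrix.cons_val_fin_one,
    Polynomial.algebraMap_eq] at hpoly
  obtain ⟨hc, htop⟩ := Polynomial.eq_zero_and_mul_pow_eq_of_substitution_eq_C_mul_X_pow hpoly
    hd hn hlam (fun p hp => (mem_filter.1 hp).2.2) (by simp; omega)
  refine ⟨fun i hi hid => hc i (mem_Ico.2 ⟨hi, by omega⟩), ?_,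
    ne_zero_pow (by omega) (right_ne_zero_of_mul (htop ▸ hlam)),
    left_ne_zero_of_mul (htop ▸ hlam), htop⟩
  rw [hg, sum_eq_single_of_mem d (mem_Icc.2 ⟨hd, le_rfl⟩) fun i hi hid => ?_]
  rw [hc i (by simp at hi ⊢; omega), map_zero, zero_mul]
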